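/- arXiv:1711.00035 — 4 statements merged into one kernel-verified Lean document; each statement's English description precedes it below -/
import Mathlib

section
/- Let r > 1 be a real number and n ≥ 1 an integer. Every holomorphic function g defined on the annulus A_{r^n} = {z ∈ ℂ : r^{-n} < |z| < r^n}, mapping A_{r^n} into the open unit disc Δ and satisfying g(1) = 0, has derivative at 1 bounded by |g'(1)| ≤ (1/n) · r/(r−1). Equivalently, the Carathéodory infinitesimal metric of A_{r^n} at the point 1 in the direction 1 satisfies C_{r^n}(1) ≤ (1/n) · r/(r−1). -/
/-!
The map `z ↦ exp (log R * z)` sends the unit disc into the annulus `A_R` and `0` to `1`, with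
derivative `log R` there. Composing `g` with it and applying the Schwarz lemma gives
`|g'(1)| ≤ 1 / log R`. For `R = r ^ n` this is `1 / (n log r)`, and `log r ≥ (r - 1) / r`.
-/

open Set Metric

namespace Complex

def roundAnnulus (R : ℝ) : Set ℂ := {z | R⁻¹ < ‖z‖ ∧ ‖z‖ < R}

theorem isOpen_roundAnnulus (R : ℝ) : IsOpen (roundAnnulus R) :=
  (isOpen_lt continuous_const continuous_norm).inter (isOpen_lt continuous_norm continuous_const)

theorem one_mem_roundAnnulus {R : ℝ} (hR : 1 < R) : (1 : ℂ) ∈ roundAnnulus R := by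
  simpa [roundAnnulus] using ⟨inv_lt_one_of_one_lt₀ hR, hR⟩

theorem mapsTo_exp_log_mul_ball_roundAnnulus {R : ℝ} (hR : 1 < R) :
    MapsTo (fun z => exp (Real.log R * z)) (ball 0 1) (roundAnnulus R) := by
  intro z hz
  have hlog : 0 < Real.log R := Real.log_pos hR
  have hre : |z.re| < 1 := (abs_re_le_norm z).trans_lt (mem_ball_zero_iff.mp hz)
  obtain ⟨hre_lo, hre_hi⟩ := abs_lt.mp hre
  have hnorm : ‖exp (Real.log R * z)‖ = Real.exp (Real.log R * z.re) := by
    simp [norm_exp]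
  refine ⟨?_, ?_⟩ <;> rw [hnorm]
  · calc R⁻¹ = Real.exp (Real.log R * -1) := by
          rw [mul_neg_one, Real.exp_neg, Real.exp_log (by linarith)]
      _ < Real.exp (Real.log R * z.re) := by gcongr
  · calc Real.exp (Real.log R * z.re) < Real.exp (Real.log R * 1) := by gcongr
      _ = R := by rw [mul_one, Real.exp_log (by linarith)]

theorem norm_deriv_le_inv_log_of_mapsTo_roundAnnulus {R : ℝ} (hR : 1 < R) {g : ℂ → ℂ}
    (hg : DifferentiableOn ℂ g (roundAnnulus R)) (hmaps : MapsTo g (roundAnnulus R) (ball 0 1))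
    (hg1 : g 1 = 0) : ‖deriv g 1‖ ≤ (Real.log R)⁻¹ := by
  set φ : ℂ → ℂ := fun z => exp (Real.log R * z)
  have hφ0 : φ 0 = 1 := by simp [φ]
  have hφmaps := mapsTo_exp_log_mul_ball_roundAnnulus hR
  have hφderiv : HasDerivAt φ (Real.log R) 0 := by
    simpa [φ] using ((hasDerivAt_id (0 : ℂ)).const_mul (Real.log R : ℂ)).cexp
  have hgderiv : HasDerivAt g (deriv g 1) (φ 0) := by
    rw [hφ0]
    exact (hg.differentiableAt ((isOpen_roundAnnulus R).mem_nhds (one_mem_roundAnnulus hR)))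
      |>.hasDerivAt
  have hschwarz : ‖deriv (g ∘ φ) 0‖ ≤ 1 / 1 := by
    refine norm_deriv_le_div_of_mapsTo_ball
      (hg.comp (by fun_prop) hφmaps) (fun z hz => ?_) one_pos
    simpa [hφ0, hg1] using ball_subset_closedBall (hmaps (hφmaps hz))
  rw [(hgderiv.comp 0 hφderiv).deriv, norm_mul, norm_real, Real.norm_of_nonneg
    (Real.log_pos hR).le, div_one] at hschwarz
  exact ((le_inv_mul_iff₀' (Real.log_pos hR)).mpr hschwarz).trans_eq (mul_one _)

end Complex

/-- Let `r > 1` and `n ≥ 1`. Every holomorphic function `g` on the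
annulus `A_{r^n} = {z : r^{-n} < |z| < r^n}` mapping into the open unit disc with
`g 1 = 0` satisfies `|g'(1)| ≤ (1/n) · r/(r-1)`. -/
theorem caratheodory_annulus_power_bound
    (r : ℝ) (hr : 1 < r) (n : ℕ) (hn : 1 ≤ n)
    (g : ℂ → ℂ)
    (hg : DifferentiableOn ℂ g {z : ℂ | (r ^ n)⁻¹ < ‖z‖ ∧ ‖z‖ < r ^ n})
    (hmaps : Set.MapsTo g {z : ℂ | (r ^ n)⁻¹ < ‖z‖ ∧ ‖z‖ < r ^ n}
      (Metric.ball (0 : ℂ) 1))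
    (hg1 : g 1 = 0) :
    ‖deriv g 1‖ ≤ (1 / n) * (r / (r - 1)) := by
  have hn0 : (0 : ℝ) < n := by exact_mod_cast hn
  have hr0 : 0 < r := by linarith
  have hlog : (r - 1) / r ≤ Real.log r := by
    simpa [sub_div, div_self hr0.ne'] using Real.one_sub_inv_le_log_of_pos hr0
  calc ‖deriv g 1‖ ≤ (Real.log (r ^ n))⁻¹ :=
        Complex.norm_deriv_le_inv_log_of_mapsTo_roundAnnulus (one_lt_pow₀ hr (by omega)) hg
          hmaps hg1
    _ = (n * Real.log r)⁻¹ := by rw [Real.log_pow]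
    _ ≤ (n * ((r - 1) / r))⁻¹ := by gcongr
    _ = 1 / n * (r / (r - 1)) := by field_simp
end

section
/- Fix a real number r > 1. For each integer n ≥ 1 let C_{r^n}(1) = sup{ |g'(1)| : g holomorphic on A_{r^n} with values in Δ and g(1) = 0 }. Then C_{r^n}(1) ≤ r/((r−1)·n) for every n, and hence the sequence n ↦ C_{r^n}(1) converges to 0 as n → ∞. -/
/-!
The exponential map sends the disc of radius `log R` into `A_R` and `0` to `1`, so for an
admissible `g` the composite `g ∘ exp` maps that disc into `Δ` and the Schwarz lemma gives
`|g'(1)| = |(g ∘ exp)'(0)| ≤ 1 / log R`. For `R = r ^ n` this is `1 / (n log r)`, and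
`log r ≥ 1 - 1/r = (r - 1)/r`.
-/

open Filter

/-- The round annulus `A_R = {z : 1/R < |z| < R}`. -/
def annulus (R : ℝ) : Set ℂ := {z : ℂ | R⁻¹ < ‖z‖ ∧ ‖z‖ < R}

/-- The Carathéodory infinitesimal metric of `A_R` at the point `1` in direction `1`. -/
noncomputable def carAnnulus (R : ℝ) : ℝ :=
  sSup {c : ℝ | ∃ g : ℂ → ℂ, DifferentiableOn ℂ g (annulus R) ∧
    Set.MapsTo g (annulus R) (Metric.ball (0 : ℂ) 1) ∧ g 1 = 0 ∧
    c = ‖deriv g 1‖}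

open Metric Set

lemma isOpen_annulus (R : ℝ) : IsOpen (annulus R) :=
  (isOpen_lt continuous_const continuous_norm).inter (isOpen_lt continuous_norm continuous_const)

lemma one_mem_annulus {R : ℝ} (hR : 1 < R) : (1 : ℂ) ∈ annulus R := by
  simp [annulus, inv_lt_one_of_one_lt₀ hR, hR]

lemma mapsTo_exp_ball_annulus (L : ℝ) :
    MapsTo Complex.exp (ball 0 L) (annulus (Real.exp L)) := by
  intro w hw
  rw [mem_ball_zero_iff] at hw
  have hre : |w.re| < L := (Complex.abs_re_le_norm w).trans_lt hw
  rw [annulus, mem_ofPred_eq, Complex.norm_exp, ← Real.exp_neg, Real.exp_lt_exp, Real.exp_lt_exp]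
  exact ⟨by linarith [neg_abs_le w.re], (le_abs_self w.re).trans_lt hre⟩

lemma norm_deriv_one_le_inv_log {R : ℝ} (hR : 1 < R) {g : ℂ → ℂ}
    (hg : DifferentiableOn ℂ g (annulus R)) (hmaps : MapsTo g (annulus R) (ball 0 1))
    (hg1 : g 1 = 0) : ‖deriv g 1‖ ≤ (Real.log R)⁻¹ := by
  have hL : 0 < Real.log R := Real.log_pos hR
  have hexp : MapsTo Complex.exp (ball 0 (Real.log R)) (annulus R) := by
    simpa [Real.exp_log (zero_lt_one.trans hR)] using mapsTo_exp_ball_annulus (Real.log R)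
  have hcomp_maps : MapsTo (g ∘ Complex.exp) (ball 0 (Real.log R))
      (closedBall ((g ∘ Complex.exp) 0) 1) := by
    simpa [hg1] using (hmaps.comp hexp).mono_right ball_subset_closedBall
  have hderiv : deriv (g ∘ Complex.exp) 0 = deriv g 1 := by
    have hg_at : DifferentiableAt ℂ g (Complex.exp 0) := by
      rw [Complex.exp_zero]
      exact hg.differentiableAt ((isOpen_annulus R).mem_nhds (one_mem_annulus hR))
    simpa using deriv_comp 0 hg_at Complex.differentiable_exp.differentiableAt
  rw [← hderiv, ← one_div]
  exact Complex.norm_deriv_le_div_of_mapsTo_ball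
    (hg.comp Complex.differentiable_exp.differentiableOn hexp) hcomp_maps hL

lemma carAnnulus_nonneg (R : ℝ) : 0 ≤ carAnnulus R :=
  Real.sSup_nonneg fun _ ⟨_, _, _, _, hc⟩ => hc ▸ norm_nonneg _

lemma carAnnulus_le_inv_log {R : ℝ} (hR : 1 < R) : carAnnulus R ≤ (Real.log R)⁻¹ :=
  Real.sSup_le (fun _ ⟨_, hg, hmaps, hg1, hc⟩ => hc ▸ norm_deriv_one_le_inv_log hR hg hmaps hg1)
    (inv_nonneg.mpr (Real.log_pos hR).le)

lemma inv_log_pow_le {r : ℝ} (hr : 1 < r) {n : ℕ} (hn : 1 ≤ n) :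
    (Real.log (r ^ n))⁻¹ ≤ r / ((r - 1) * n) := by
  have hlog : (r - 1) / r ≤ Real.log r := by
    simpa [sub_div, div_self (zero_lt_one.trans hr).ne'] using
      Real.one_sub_inv_le_log_of_pos (zero_lt_one.trans hr)
  calc (Real.log (r ^ n))⁻¹ = (n * Real.log r)⁻¹ := by rw [Real.log_pow]
    _ ≤ (n * ((r - 1) / r))⁻¹ := by gcongr
    _ = r / ((r - 1) * n) := by field_simp

/-- for fixed `r > 1`, the Carathéodory metric of `A_{r^n}` at `1`
satisfies `C_{r^n}(1) ≤ r/((r-1)·n)` for every `n ≥ 1`, and hence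
`C_{r^n}(1) → 0` as `n → ∞`. -/
theorem caratheodory_annulus_power_decay (r : ℝ) (hr : 1 < r) :
    (∀ n : ℕ, 1 ≤ n → carAnnulus (r ^ n) ≤ r / ((r - 1) * n)) ∧
    Tendsto (fun n : ℕ => carAnnulus (r ^ n)) atTop (nhds 0) := by
  have bound : ∀ n : ℕ, 1 ≤ n → carAnnulus (r ^ n) ≤ r / ((r - 1) * n) := fun n hn =>
    (carAnnulus_le_inv_log (one_lt_pow₀ hr (by omega))).trans (inv_log_pow_le hr hn)
  refine ⟨bound, ?_⟩
  have hlim : Tendsto (fun n : ℕ => r / ((r - 1) * n)) atTop (nhds 0) := by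
    simpa only [div_div] using tendsto_const_div_atTop_nhds_zero_nat (r / (r - 1))
  exact tendsto_of_tendsto_of_tendsto_of_le_of_le' tendsto_const_nhds hlim
    (Eventually.of_forall fun n => carAnnulus_nonneg _) (eventually_ge_atTop 1 |>.mono bound)
end

section
/- Let r > 1. Every holomorphic function f from the open unit disc Δ into the annulus A_r = {z ∈ ℂ : 1/r < |z| < r} with f(0) = 1 satisfies |f'(0)| ≤ (4 log r)/π. (Such an f lifts through the holomorphic covering ζ ↦ exp(iζ) of A_r by the strip {|Im ζ| < log r}, and the bound follows from the Schwarz–Pick inequality for the strip; this gives the lower bound for the Kobayashi infinitesimal metric of A_r at a point of its core curve.) -/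
/-!
Since `f` omits `0`, it has a holomorphic logarithm `g` on the disc with `g 0 = 0`, and `g` takes
values in the strip `|re w| < log r`. Following `g` by a conformal map of the strip onto the disc
that fixes `0` and has derivative `iπ / (4 log r)` there, the Schwarz lemma gives
`‖g' 0‖ ≤ 4 log r / π`, and `f' 0 = g' 0` because `f = exp ∘ g`.
-/

open Complex Metric Set
open scoped Real

theorem Complex.exists_differentiableOn_eqOn_exp_comp_ball {f : ℂ → ℂ} {c w : ℂ} {R : ℝ}
    (hf : DifferentiableOn ℂ f (ball c R)) (hne : ∀ z ∈ ball c R, f z ≠ 0)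
    (hw : exp w = f c) :
    ∃ g, DifferentiableOn ℂ g (ball c R) ∧ g c = w ∧ EqOn (exp ∘ g) f (ball c R) := by
  have hf' : DifferentiableOn ℂ (deriv f) (ball c R) :=
    (hf.analyticOnNhd isOpen_ball).deriv.differentiableOn
  obtain ⟨g, hgc, hg⟩ := (hf'.div hf hne).isExactOn_ball.with_val_at c w
  have hquot : ∀ z ∈ ball c R, HasDerivAt (fun z => f z * exp (-g z)) 0 z := by
    intro z hz
    have hfz := (hf.differentiableAt (isOpen_ball.mem_nhds hz)).hasDerivAt
    refine (hfz.mul (hg z hz).neg.cexp).congr_deriv ?_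
    simp only [Pi.div_apply, Pi.neg_apply]
    field_simp [hne z hz]
    ring
  refine ⟨g, fun z hz => (hg z hz).differentiableAt.differentiableWithinAt, hgc, fun z hz => ?_⟩
  have hc : c ∈ ball c R := mem_ball_self (pos_of_mem_ball hz)
  have hconst := isOpen_ball.is_const_of_deriv_eq_zero (convex_ball c R).isPreconnected
    (fun x hx => (hquot x hx).differentiableAt.differentiableWithinAt)
    (fun x hx => (hquot x hx).deriv) hz hc
  rw [hgc, exp_neg, exp_neg, hw, mul_inv_cancel₀ (hne c hc),
    mul_inv_eq_one₀ (exp_ne_zero _)] at hconst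
  exact hconst.symm

theorem Complex.norm_sub_one_lt_norm_add_one {w : ℂ} (hw : 0 < w.re) : ‖w - 1‖ < ‖w + 1‖ := by
  rw [← sq_lt_sq₀ (norm_nonneg _) (norm_nonneg _), Complex.sq_norm, Complex.sq_norm,
    normSq_apply, normSq_apply]
  simp only [sub_re, sub_im, add_re, add_im, one_re, one_im]
  nlinarith

theorem Complex.re_exp_pos {u : ℂ} (hu : |u.im| < π / 2) : 0 < (exp u).re := by
  rw [exp_re]
  exact mul_pos (Real.exp_pos _) (Real.cos_pos_of_mem_Ioo (abs_lt.1 hu))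

/-- `w ↦ exp (iπw / (2L))` maps the strip `|re w| < L` onto the right half-plane, which the
Cayley transform `ζ ↦ (ζ - 1) / (ζ + 1)` maps onto the unit disc. -/
noncomputable def stripToDisc (L : ℝ) (w : ℂ) : ℂ :=
  (exp ((π / (2 * L) : ℝ) * I * w) - 1) / (exp ((π / (2 * L) : ℝ) * I * w) + 1)

theorem re_exp_stripToDisc_pos {L : ℝ} {w : ℂ} (hw : |w.re| < L) :
    0 < (exp ((π / (2 * L) : ℝ) * I * w)).re := by
  have hL : 0 < L := (abs_nonneg _).trans_lt hw
  apply re_exp_pos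
  have him : ((π / (2 * L) : ℝ) * I * w).im = π / (2 * L) * w.re := by
    rw [mul_assoc, im_ofReal_mul, I_mul_im]
  rw [him, abs_mul, abs_of_pos (by positivity)]
  calc π / (2 * L) * |w.re| < π / (2 * L) * L := by gcongr
    _ = π / 2 := by field_simp

theorem stripToDisc_mem_ball {L : ℝ} {w : ℂ} (hw : |w.re| < L) :
    stripToDisc L w ∈ ball 0 1 := by
  have hlt := norm_sub_one_lt_norm_add_one (re_exp_stripToDisc_pos hw)
  rw [mem_ball_zero_iff, stripToDisc, norm_div, div_lt_one ((norm_nonneg _).trans_lt hlt)]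
  exact hlt

theorem differentiableAt_stripToDisc {L : ℝ} {w : ℂ} (hw : |w.re| < L) :
    DifferentiableAt ℂ (stripToDisc L) w := by
  have hden : exp ((π / (2 * L) : ℝ) * I * w) + 1 ≠ 0 := norm_pos_iff.1
    ((norm_nonneg _).trans_lt (norm_sub_one_lt_norm_add_one (re_exp_stripToDisc_pos hw)))
  unfold stripToDisc
  fun_prop (disch := exact hden)

theorem hasDerivAt_stripToDisc_zero (L : ℝ) :
    HasDerivAt (stripToDisc L) ((π / (4 * L) : ℝ) * I) 0 := by
  set a : ℂ := (π / (2 * L) : ℝ) * I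
  have hE : HasDerivAt (fun w => exp (a * w)) a 0 := by
    simpa using ((hasDerivAt_id (0 : ℂ)).const_mul a).cexp
  have hden : exp (a * 0) + 1 ≠ 0 := by norm_num
  refine ((hE.sub_const 1).div (hE.add_const 1) hden).congr_deriv ?_
  simp only [a, mul_zero, exp_zero]
  push_cast
  ring

theorem norm_deriv_le_of_mapsTo_strip {g : ℂ → ℂ} {c : ℂ} {R L : ℝ} (hR : 0 < R)
    (hg : DifferentiableOn ℂ g (ball c R)) (hmaps : MapsTo g (ball c R) {w | |w.re| < L})
    (hgc : g c = 0) : ‖deriv g c‖ ≤ 4 * L / (π * R) := by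
  have hc : c ∈ ball c R := mem_ball_self hR
  have hL : 0 < L := by simpa [hgc] using hmaps hc
  have hF : DifferentiableOn ℂ (stripToDisc L ∘ g) (ball c R) := fun z hz =>
    (differentiableAt_stripToDisc (hmaps hz)).comp_differentiableWithinAt z (hg z hz)
  have hFmaps : MapsTo (stripToDisc L ∘ g) (ball c R) (closedBall (stripToDisc L (g c)) 1) := by
    rw [hgc, (by simp [stripToDisc] : stripToDisc L 0 = 0)]
    exact fun z hz => ball_subset_closedBall (stripToDisc_mem_ball (hmaps hz))
  have hFderiv : deriv (stripToDisc L ∘ g) c = (π / (4 * L) : ℝ) * I * deriv g c := by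
    have hgc' := (hg.differentiableAt (isOpen_ball.mem_nhds hc)).hasDerivAt
    have h0 := hasDerivAt_stripToDisc_zero L
    rw [← hgc] at h0
    exact (h0.comp c hgc').deriv
  have hschwarz := norm_deriv_le_div_of_mapsTo_ball hF hFmaps hR
  rw [hFderiv, norm_mul, norm_mul, norm_I, mul_one, norm_real,
    Real.norm_of_nonneg (by positivity)] at hschwarz
  field_simp at hschwarz ⊢
  linarith

theorem abs_re_lt_log_iff {w : ℂ} {r : ℝ} (hr : 0 < r) :
    |w.re| < Real.log r ↔ r⁻¹ < ‖exp w‖ ∧ ‖exp w‖ < r := by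
  rw [norm_exp, abs_lt, ← Real.lt_log_iff_exp_lt hr, ← Real.log_lt_iff_lt_exp (inv_pos.2 hr),
    Real.log_inv, neg_lt]

/-- Kobayashi lower bound for the annulus. If `r > 1` and `f` is
holomorphic on the open unit disc with values in the annulus
`A_r = {z : 1/r < |z| < r}` and `f 0 = 1`, then `|f'(0)| ≤ (4 log r)/π`. -/
theorem kobayashi_annulus_core_bound (r : ℝ) (hr : 1 < r)
    (f : ℂ → ℂ)
    (hf : DifferentiableOn ℂ f (Metric.ball (0 : ℂ) 1))
    (hmaps : Set.MapsTo f (Metric.ball (0 : ℂ) 1)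
      {z : ℂ | r⁻¹ < ‖z‖ ∧ ‖z‖ < r})
    (hf0 : f 0 = 1) :
    ‖deriv f 0‖ ≤ 4 * Real.log r / Real.pi := by
  have hr0 : 0 < r := zero_lt_one.trans hr
  have hne : ∀ z ∈ ball (0 : ℂ) 1, f z ≠ 0 := fun z hz =>
    norm_pos_iff.1 ((inv_pos.2 hr0).trans (hmaps hz).1)
  obtain ⟨g, hg, hg0, hfg⟩ :=
    exists_differentiableOn_eqOn_exp_comp_ball hf hne (by rw [exp_zero, hf0])
  have hstrip : MapsTo g (ball 0 1) {w | |w.re| < Real.log r} := fun z hz =>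
    (abs_re_lt_log_iff hr0).2 (hmaps.congr hfg.symm hz)
  have h0 : ball (0 : ℂ) 1 ∈ nhds 0 := isOpen_ball.mem_nhds (mem_ball_self one_pos)
  have hderiv : deriv f 0 = deriv g 0 := by
    rw [← (hfg.eventuallyEq_of_mem h0).deriv_eq, Function.comp_def,
      (hg.differentiableAt h0).hasDerivAt.cexp.deriv, hg0, exp_zero, one_mul]
  simpa [hderiv] using norm_deriv_le_of_mapsTo_strip one_pos hg hstrip hg0
end

section
/- Let r > 1. There exists a holomorphic function f from the open unit disc Δ into the annulus A_r = {z ∈ ℂ : 1/r < |z| < r} with f(0) = 1 and |f'(0)| = (4 log r)/π; explicitly one may take f(t) = exp( i · (2 log r/π) · log((1+t)/(1−t)) ), the composition of the biholomorphism from Δ onto the strip {|Im ζ| < log r} with the covering map ζ ↦ exp(iζ). -/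
/-!
The map is `ζ ↦ exp (i ζ)` composed with `t ↦ c log ((1 + t) / (1 - t))`. The Cayley transform
sends the disc into the right half-plane, where `|arg| < π / 2`, so `ζ` stays in the strip
`|Im ζ| < c π / 2 = log r`, which `exp (i ·)` maps into `A_r`; the derivative at `0` is `2 i c`.
-/

open Complex

namespace Complex

lemma one_sub_ne_zero_of_norm_lt_one {t : ℂ} (ht : ‖t‖ < 1) : 1 - t ≠ 0 := by
  rw [sub_ne_zero]
  rintro rfl
  simp at ht

lemma re_one_add_div_one_sub_pos {t : ℂ} (ht : ‖t‖ < 1) : 0 < ((1 + t) / (1 - t)).re := by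
  have hnormSq : t.re * t.re + t.im * t.im < 1 := by
    rw [← normSq_apply, normSq_eq_norm_sq]
    nlinarith [norm_nonneg t]
  rw [div_re, ← add_div]
  apply div_pos _ (normSq_pos.mpr (one_sub_ne_zero_of_norm_lt_one ht))
  simp only [add_re, sub_re, add_im, sub_im, one_re, one_im]
  nlinarith

lemma abs_im_log_one_add_div_one_sub_lt {t : ℂ} (ht : ‖t‖ < 1) :
    |(log ((1 + t) / (1 - t))).im| < Real.pi / 2 := by
  rw [log_im]
  exact abs_arg_lt_pi_div_two_iff.mpr (Or.inl (re_one_add_div_one_sub_pos ht))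

lemma norm_exp_mem_annulus {r : ℝ} (hr : 0 < r) {z : ℂ} (hz : |z.re| < Real.log r) :
    r⁻¹ < ‖exp z‖ ∧ ‖exp z‖ < r := by
  rw [norm_exp, ← Real.exp_log hr, ← Real.exp_neg]
  obtain ⟨hlow, hhigh⟩ := abs_lt.mp hz
  exact ⟨Real.exp_lt_exp.mpr hlow, Real.exp_lt_exp.mpr hhigh⟩

lemma differentiableOn_exp_mul_log_one_add_div_one_sub (a : ℂ) :
    DifferentiableOn ℂ (fun t : ℂ => exp (a * log ((1 + t) / (1 - t)))) (Metric.ball 0 1) := by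
  intro t ht
  rw [mem_ball_zero_iff] at ht
  have hcayley : DifferentiableAt ℂ (fun t : ℂ => (1 + t) / (1 - t)) t :=
    (by fun_prop : DifferentiableAt ℂ (fun t : ℂ => 1 + t) t).div (by fun_prop)
      (one_sub_ne_zero_of_norm_lt_one ht)
  exact ((hcayley.clog (Or.inl (re_one_add_div_one_sub_pos ht))).const_mul a).cexp
    |>.differentiableWithinAt

lemma hasDerivAt_exp_mul_log_one_add_div_one_sub_zero (a : ℂ) :
    HasDerivAt (fun t : ℂ => exp (a * log ((1 + t) / (1 - t)))) (2 * a) 0 := by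
  have hcayley : HasDerivAt (fun t : ℂ => (1 + t) / (1 - t)) 2 0 := by
    have hnum : HasDerivAt (fun t : ℂ => 1 + t) 1 0 := (hasDerivAt_id 0).const_add 1
    have hden : HasDerivAt (fun t : ℂ => 1 - t) (-1) 0 := (hasDerivAt_id 0).const_sub 1
    exact (hnum.div hden (by norm_num)).congr_deriv (by norm_num)
  have hlog : HasDerivAt (fun t : ℂ => log ((1 + t) / (1 - t))) 2 0 := by
    simpa using hcayley.clog (by norm_num [mem_slitPlane_iff])
  simpa [mul_comm] using (hlog.const_mul a).cexp

lemma mapsTo_exp_I_mul_log_one_add_div_one_sub {r c : ℝ} (hr : 0 < r) (hc : 0 < c)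
    (hcr : c * (Real.pi / 2) ≤ Real.log r) :
    Set.MapsTo (fun t : ℂ => exp (I * c * log ((1 + t) / (1 - t)))) (Metric.ball 0 1)
      {z : ℂ | r⁻¹ < ‖z‖ ∧ ‖z‖ < r} := by
  intro t ht
  rw [mem_ball_zero_iff] at ht
  apply norm_exp_mem_annulus hr
  have hre : (I * c * log ((1 + t) / (1 - t))).re = -(c * (log ((1 + t) / (1 - t))).im) := by
    simp [mul_re, mul_im]
  calc |(I * c * log ((1 + t) / (1 - t))).re|
      = c * |(log ((1 + t) / (1 - t))).im| := by rw [hre, abs_neg, abs_mul, abs_of_pos hc]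
    _ < c * (Real.pi / 2) := mul_lt_mul_of_pos_left (abs_im_log_one_add_div_one_sub_lt ht) hc
    _ ≤ Real.log r := hcr

end Complex

/-- for `r > 1`, the explicit map
`f(t) = exp(i · (2 log r/π) · log((1+t)/(1−t)))` is holomorphic from the open unit
disc into the annulus `A_r`, with `f 0 = 1` and `|f'(0)| = (4 log r)/π`; in
particular such an extremal map exists. -/
theorem kobayashi_annulus_extremal_map (r : ℝ) (hr : 1 < r) :
    (DifferentiableOn ℂ
        (fun t : ℂ =>
          Complex.exp (Complex.I * ((2 * Real.log r / Real.pi : ℝ) : ℂ) *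
            Complex.log ((1 + t) / (1 - t))))
        (Metric.ball (0 : ℂ) 1) ∧
      Set.MapsTo
        (fun t : ℂ =>
          Complex.exp (Complex.I * ((2 * Real.log r / Real.pi : ℝ) : ℂ) *
            Complex.log ((1 + t) / (1 - t))))
        (Metric.ball (0 : ℂ) 1) {z : ℂ | r⁻¹ < ‖z‖ ∧ ‖z‖ < r} ∧
      Complex.exp (Complex.I * ((2 * Real.log r / Real.pi : ℝ) : ℂ) *
          Complex.log ((1 + 0) / (1 - 0))) = 1 ∧
      ‖
        (deriv (fun t : ℂ =>
          Complex.exp (Complex.I * ((2 * Real.log r / Real.pi : ℝ) : ℂ) *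
            Complex.log ((1 + t) / (1 - t)))) 0)‖ = 4 * Real.log r / Real.pi) ∧
    ∃ f : ℂ → ℂ, DifferentiableOn ℂ f (Metric.ball (0 : ℂ) 1) ∧
      Set.MapsTo f (Metric.ball (0 : ℂ) 1)
        {z : ℂ | r⁻¹ < ‖z‖ ∧ ‖z‖ < r} ∧
      f 0 = 1 ∧ ‖deriv f 0‖ = 4 * Real.log r / Real.pi := by
  have hlog : 0 < Real.log r := Real.log_pos hr
  set c : ℝ := 2 * Real.log r / Real.pi
  have hc : 0 < c := by positivity
  have hcr : c * (Real.pi / 2) = Real.log r := by simp only [c]; field_simp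
  have hmaps := mapsTo_exp_I_mul_log_one_add_div_one_sub (by linarith) hc hcr.le
  have hdiff := differentiableOn_exp_mul_log_one_add_div_one_sub (I * c)
  have hzero : exp (I * c * log ((1 + 0) / (1 - 0))) = 1 := by simp
  have hderiv : ‖deriv (fun t : ℂ => exp (I * c * log ((1 + t) / (1 - t)))) 0‖ =
      4 * Real.log r / Real.pi := by
    rw [(hasDerivAt_exp_mul_log_one_add_div_one_sub_zero (I * c)).deriv]
    simp only [norm_mul, norm_I, norm_real, Real.norm_eq_abs, abs_of_pos hc, c]
    norm_num
    ring
  exact ⟨⟨hdiff, hmaps, hzero, hderiv⟩, _, hdiff, hmaps, hzero, hderiv⟩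
end
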